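/- For every pair (p,q) in the image of φ on the join-irreducible elements P of Γ(X;γ), and every (p',q') with p' ≤ p and q' ≤ q, there exists a join-irreducible element c' of Γ(X;γ) with φ(c') = (p',q'). -/

import Mathlib

def IsTup (n m : ℕ) (c : Fin m → ℕ) : Prop :=
  StrictMono c ∧ ∀ i, 1 ≤ c i ∧ c i ≤ n

def Gamma (n m : ℕ) : Set (Fin m → ℕ) := {c | IsTup n m c}

def GammaF (n m : ℕ) (b : Fin m → ℕ) : Set (Fin m → ℕ) :=
  {c | IsTup n m c ∧ b ≤ c}

/-- `prev c i` is `c (i-1)`, with the convention `c 0 = 0` (1-based indexing). -/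
def prev {m : ℕ} (c : Fin m → ℕ) (i : Fin m) : ℕ :=
  if _ : i.1 = 0 then 0 else c ⟨i.1 - 1, Nat.lt_of_le_of_lt (Nat.sub_le _ _) i.2⟩

/-- the condition `c i > b i` and `c i > c (i-1) + 1`. -/
def Good {m : ℕ} (b c : Fin m → ℕ) (i : Fin m) : Prop :=
  b i < c i ∧ prev c i + 1 < c i

/-- `c` is join-irreducible in `Γ(X;γ)`: it covers exactly one element. -/
def JoinIrr (n m : ℕ) (b : Fin m → ℕ) (c : ↥(GammaF n m b)) : Prop :=
  ∃! y : ↥(GammaF n m b), y ⋖ c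

/-- the poset of join-irreducible elements of `Γ(X;γ)`. -/
def JP (n m : ℕ) (b : Fin m → ℕ) : Set ↥(GammaF n m b) := {c | JoinIrr n m b c}

/-- the map φ, computed at index `i` (0-based; 1-based index is `i+1`). -/
def phi (n m : ℕ) (c : Fin m → ℕ) (i : Fin m) : ℕ × ℕ :=
  (n - c i - (m - 1 - i.1), i.1)

/-!
For a position `t` and a value `v > γ t` leaving room for the later entries, the least tuple
`δ ≥ γ` with `δ t ≥ v` is obtained by raising the entries from position `t` on to at least
`v, v + 1, …`. It is join-irreducible: every tuple strictly below it has `t`-th entry below `v`,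
so it lies under the tuple obtained by lowering the `t`-th entry to `v - 1`, which is therefore
its unique lower cover.
The value of `φ` at such an element is `(n - v - (m - 1 - t), t)`, so any `(p', q')` below a value
of `φ` is attained by choosing `t = q'` and `v = n - p' - (m - 1 - q')`; this `v` exceeds `γ t`
because the given `c` satisfies `c i > γ i ≥ γ t + (i - t)`.
-/

theorem existsUnique_covBy_of_isGreatest {α : Type*} [PartialOrder α] {a b : α}
    (h : IsGreatest (Set.Iio a) b) : ∃! x, x ⋖ a :=
  ⟨b, ⟨h.1, fun _ hbc hca => (h.2 hca).not_gt hbc⟩,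
    fun _ hy => (h.2 hy.1).eq_of_not_lt fun hyb => hy.2 hyb h.1⟩

theorem StrictMono.apply_add_le_apply_add {m : ℕ} {f : Fin m → ℕ} (hf : StrictMono f)
    {i j : Fin m} (hij : i ≤ j) : f i + j ≤ f j + i := by
  obtain ⟨i, hi⟩ := i
  obtain ⟨j, hj⟩ := j
  simp only [Fin.mk_le_mk] at hij
  induction j, hij using Nat.le_induction with
  | base => rfl
  | succ j _ ih =>
    have step : f ⟨j, by omega⟩ < f ⟨j + 1, hj⟩ := hf (Fin.mk_lt_mk.mpr j.lt_succ_self)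
    have := ih (by omega)
    simp only at this ⊢
    omega

section Tuples

variable {n m : ℕ} {b c : Fin m → ℕ}

theorem IsTup.apply_add_le (hc : IsTup n m c) (i : Fin m) : c i + (m - 1 - i) ≤ n := by
  obtain _ | k := m
  · exact i.elim0
  have := hc.1.apply_add_le_apply_add (Fin.le_last i)
  have := (hc.2 (Fin.last k)).2
  simp only [Fin.val_last] at *
  omega

theorem IsTup.prev_lt (hb : IsTup n m b) (t : Fin m) : prev b t < b t := by
  unfold prev
  split_ifs with ht
  · exact (hb.2 t).1
  · exact hb.1 (Fin.mk_lt_mk.mpr (by omega))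

theorem prev_congr {t : Fin m} (h : ∀ j < t, b j = c j) : prev b t = prev c t := by
  unfold prev
  split_ifs with ht
  · rfl
  · exact h _ (Fin.mk_lt_mk.mpr (by omega))

def leastAbove (b : Fin m → ℕ) (t : Fin m) (v : ℕ) : Fin m → ℕ :=
  fun j => if t ≤ j then max (b j) (v + (j.1 - t.1)) else b j

variable {t : Fin m} {v : ℕ}

theorem leastAbove_of_lt {j : Fin m} (hj : j < t) : leastAbove b t v j = b j :=
  if_neg (not_le.mpr hj)

theorem leastAbove_of_le {j : Fin m} (hj : t ≤ j) :
    leastAbove b t v j = max (b j) (v + (j.1 - t.1)) :=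
  if_pos hj

theorem leastAbove_self (hv : b t ≤ v) : leastAbove b t v t = v := by
  rw [leastAbove_of_le le_rfl, Nat.sub_self, add_zero, max_eq_right hv]

theorem le_leastAbove : b ≤ leastAbove b t v := by
  intro j
  by_cases hj : t ≤ j
  · rw [leastAbove_of_le hj]; exact le_max_left _ _
  · rw [leastAbove_of_lt (not_le.mp hj)]

theorem leastAbove_le (hc : StrictMono c) (hbc : b ≤ c) (hv : v ≤ c t) :
    leastAbove b t v ≤ c := by
  intro j
  show leastAbove b t v j ≤ c j
  by_cases hj : t ≤ j
  · have := hc.apply_add_le_apply_add hj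
    have : t.1 ≤ j.1 := hj
    rw [leastAbove_of_le hj]
    refine max_le (hbc j) ?_
    omega
  · rw [leastAbove_of_lt (not_le.mp hj)]; exact hbc j

theorem StrictMono.leastAbove (hb : StrictMono b) : StrictMono (leastAbove b t v) := by
  intro j k hjk
  have hjk' : j.1 < k.1 := hjk
  by_cases hj : t ≤ j
  · rw [leastAbove_of_le hj, leastAbove_of_le (hj.trans hjk.le)]
    exact max_lt_max (hb hjk) (by omega)
  · rw [leastAbove_of_lt (not_le.mp hj)]
    exact (hb hjk).trans_le (le_leastAbove k)

theorem leastAbove_mem (hb : IsTup n m b) (hroom : v + (m - 1 - t) ≤ n) :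
    leastAbove b t v ∈ GammaF n m b := by
  refine ⟨⟨hb.1.leastAbove, fun j => ⟨(hb.2 j).1.trans (le_leastAbove j), ?_⟩⟩, le_leastAbove⟩
  by_cases hj : t ≤ j
  · have : t.1 ≤ j.1 := hj
    rw [leastAbove_of_le hj]
    exact max_le (hb.2 j).2 (by omega)
  · rw [leastAbove_of_lt (not_le.mp hj)]; exact (hb.2 j).2

theorem update_leastAbove_mem (hb : IsTup n m b) (hv : b t < v) (hroom : v + (m - 1 - t) ≤ n) :
    Function.update (leastAbove b t v) t (v - 1) ∈ GammaF n m b := by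
  obtain ⟨⟨hmono, hbound⟩, hle⟩ := leastAbove_mem hb hroom
  have hbt := (hb.2 t).1
  have hupdate_ge : b ≤ Function.update (leastAbove b t v) t (v - 1) :=
    le_update_iff.mpr ⟨by omega, fun j _ => hle j⟩
  refine ⟨⟨?_, fun j => ⟨(hb.2 j).1.trans (hupdate_ge j), ?_⟩⟩, hupdate_ge⟩
  · intro j k hjk
    have hjk' : j.1 < k.1 := hjk
    rcases eq_or_ne j t with rfl | hj
    · rw [Function.update_self, Function.update_of_ne (ne_of_gt hjk), leastAbove_of_le hjk.le]
      omega
    rcases eq_or_ne k t with rfl | hk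
    · rw [Function.update_self, Function.update_of_ne hj, leastAbove_of_lt hjk]
      have := hb.1 hjk
      omega
    · rw [Function.update_of_ne hj, Function.update_of_ne hk]; exact hmono hjk
  · rcases eq_or_ne j t with rfl | hj
    · rw [Function.update_self]; omega
    · rw [Function.update_of_ne hj]; exact (hbound j).2

theorem joinIrr_leastAbove (hb : IsTup n m b) (hv : b t < v) (hroom : v + (m - 1 - t) ≤ n) :
    JoinIrr n m b ⟨leastAbove b t v, leastAbove_mem hb hroom⟩ := by
  refine existsUnique_covBy_of_isGreatest (b := ⟨_, update_leastAbove_mem hb hv hroom⟩)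
    ⟨?_, fun z hz => ?_⟩
  · change Function.update (leastAbove b t v) t (v - 1) < leastAbove b t v
    exact update_lt_self_iff.mpr (by rw [leastAbove_self hv.le]; omega)
  · obtain ⟨⟨hzmono, -⟩, hbz⟩ := z.2
    have hz : (z : Fin m → ℕ) < leastAbove b t v := hz
    have hzt : (z : Fin m → ℕ) t < v := by
      by_contra! hvz
      exact hz.not_ge (leastAbove_le hzmono hbz hvz)
    exact le_update_iff.mpr ⟨by omega, fun j _ => hz.le j⟩

theorem good_leastAbove (hb : IsTup n m b) (hv : b t < v) : Good b (leastAbove b t v) t := by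
  have := hb.prev_lt t
  rw [Good, leastAbove_self hv.le, prev_congr (c := b) fun j hj => leastAbove_of_lt hj]
  omega

end Tuples

theorem stmt13_general (n m : ℕ) (b : Fin m → ℕ)
    (hb : b ∈ Gamma n m) (c : ↥(GammaF n m b))
    (i : Fin m) (hi : Good b (c : Fin m → ℕ) i)
    (p q p' q' : ℕ) (hpq : phi n m (c : Fin m → ℕ) i = (p, q))
    (hp : p' ≤ p) (hq : q' ≤ q) :
    ∃ c' : ↥(GammaF n m b), ∃ i' : Fin m, JoinIrr n m b c' ∧
      Good b (c' : Fin m → ℕ) i' ∧ phi n m (c' : Fin m → ℕ) i' = (p', q') := by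
  obtain ⟨rfl, rfl⟩ := Prod.mk.inj hpq
  set t : Fin m := ⟨q', hq.trans_lt i.2⟩
  have hroom := c.2.1.apply_add_le i
  have hgood := hi.1
  have hspread := hb.1.apply_add_le_apply_add (show t ≤ i from hq)
  have hv : b t < n - p' - (m - 1 - q') := by simp only [t] at hspread ⊢; omega
  have hroom' : n - p' - (m - 1 - q') + (m - 1 - t) ≤ n := by simp only [t]; omega
  refine ⟨_, t, joinIrr_leastAbove hb hv hroom', good_leastAbove hb hv, ?_⟩
  simp only [phi, leastAbove_self hv.le, t, Prod.mk.injEq, and_true]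
  omega

theorem stmt13 (n m : ℕ) (hm : 1 ≤ m) (hmn : m ≤ n) (b : Fin m → ℕ)
    (hb : b ∈ Gamma n m) (c : ↥(GammaF n m b)) (hc : JoinIrr n m b c)
    (i : Fin m) (hi : Good b (c : Fin m → ℕ) i)
    (p q p' q' : ℕ) (hpq : phi n m (c : Fin m → ℕ) i = (p, q))
    (hp : p' ≤ p) (hq : q' ≤ q) :
    ∃ c' : ↥(GammaF n m b), ∃ i' : Fin m, JoinIrr n m b c' ∧
      Good b (c' : Fin m → ℕ) i' ∧ phi n m (c' : Fin m → ℕ) i' = (p', q') :=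
  stmt13_general n m b hb c i hi p q p' q' hpq hp hq
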